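/- The Coxeter group of type D_n admits a presentation with three generators σ₁, σ, ρ and relations: σ₁σⁱσ₁σ⁻ⁱ = σⁱσ₁σ⁻ⁱσ₁ for 2 ≤ i ≤ n/2; σⁿ = (σσ₁)ⁿ⁻¹; ρσⁱσ₁σ⁻ⁱ = σⁱσ₁σ⁻ⁱρ for i = 0 and 2 ≤ i ≤ n−2; ρσσ₁σ⁻¹ρ = σσ₁σ⁻¹ρσσ₁σ⁻¹; σ₁² = 1; ρ² = 1. -/

import Mathlib

/-!
Send `σ₁ ↦ s₁`, `σ ↦ c = s₁ s₂ ⋯ s_{n-1}`, `ρ ↦ r`, and back `s_{i+1} ↦ σⁱ σ₁ σ⁻ⁱ`, `r ↦ ρ`.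

In `D_n` the generators `s₁, …, s_{n-1}` satisfy the relations of type `A_{n-1}`, which give
`c sᵢ c⁻¹ = s_{i+1}` and hence `s_{i+1} = cⁱ s₁ c⁻ⁱ`. The telescoping identity
`(∏_{i<k} σⁱ σ₁ σ⁻ⁱ) σᵏ = (σ₁ σ)ᵏ` then yields `cⁿ = (c s₁)ⁿ⁻¹` in `D_n`, and conversely turns
`σⁿ = (σ σ₁)ⁿ⁻¹` into `σ = ∏_{i<n-1} σⁱ σ₁ σ⁻ⁱ` in the three-generator group. There `σⁿ` commutes
with `σ₁`, so `i ↦ σⁱ σ₁ σ⁻ⁱ` is `n`-periodic and the commutations for `2 ≤ i ≤ n/2` give those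
for `2 ≤ i ≤ n - 2`. Finally, writing `σ = σ₁ a T` with `a = σ σ₁ σ⁻¹` and `T` commuting with `σ₁`,
the identity `a σ = σ σ₁` becomes the braid relation `a σ₁ a = σ₁ a σ₁`.
-/

namespace CoxeterD

open FreeGroup in
/-- Relators of the standard Coxeter presentation of type `D_n`: `Sum.inl i` is
`s_{i+1}` (`i : Fin (n-1)`), `Sum.inr ()` is `r`.  All generators are involutions,
`r` commutes with every `sᵢ` except `s₂`, and `(rs₂)³ = 1`. -/
inductive IsCoxDRel (n : ℕ) : FreeGroup (Fin (n - 1) ⊕ Unit) → Prop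
  | sq (i : Fin (n - 1)) : IsCoxDRel n ((of (.inl i)) ^ 2)
  | r_sq : IsCoxDRel n ((of (.inr ()) : FreeGroup (Fin (n - 1) ⊕ Unit)) ^ 2)
  | comm_ss (i j : Fin (n - 1)) (h : (i : ℕ) + 1 < j) :
      IsCoxDRel n ((of (.inl i) * of (.inl j)) ^ 2)
  | braid_s (i : ℕ) (h : i + 1 < n - 1) :
      IsCoxDRel n ((of (.inl ⟨i, by omega⟩) * of (.inl ⟨i + 1, h⟩)) ^ 3)
  | comm_r (i : Fin (n - 1)) (h : (i : ℕ) ≠ 1) :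
      IsCoxDRel n ((of (.inr ()) * of (.inl i)) ^ 2)
  | braid_r (h : 1 < n - 1) :
      IsCoxDRel n ((of (.inr ()) * of (.inl ⟨1, h⟩)) ^ 3)

open FreeGroup in
/-- Relators of the three-generator presentation of the Coxeter group of type `D_n`:
generator `0` is `σ₁`, generator `1` is `σ`, generator `2` is `ρ`. -/
inductive IsCoxDThreeRel (n : ℕ) : FreeGroup (Fin 3) → Prop
  | r₁ (i : ℕ) (h₁ : 2 ≤ i) (h₂ : i ≤ n / 2) :
      IsCoxDThreeRel n (of 0 * of 1 ^ i * of 0 * (of 1 ^ i)⁻¹ *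
        (of 1 ^ i * of 0 * (of 1 ^ i)⁻¹ * of 0)⁻¹)
  | r₂ : IsCoxDThreeRel n (of 1 ^ n * ((of 1 * of 0) ^ (n - 1))⁻¹)
  | r₃ (i : ℕ) (h : i = 0 ∨ (2 ≤ i ∧ i ≤ n - 2)) :
      IsCoxDThreeRel n (of 2 * (of 1 ^ i * of 0 * (of 1 ^ i)⁻¹) *
        (of 1 ^ i * of 0 * (of 1 ^ i)⁻¹ * of 2)⁻¹)
  | r₄ : IsCoxDThreeRel n (of 2 * (of 1 * of 0 * (of 1)⁻¹) * of 2 *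
      (of 1 * of 0 * (of 1)⁻¹ * of 2 * (of 1 * of 0 * (of 1)⁻¹))⁻¹)
  | r₅ : IsCoxDThreeRel n ((of 0 : FreeGroup (Fin 3)) ^ 2)
  | r₆ : IsCoxDThreeRel n ((of 2 : FreeGroup (Fin 3)) ^ 2)

section Involutions

variable {G : Type*} [Group G] {u v : G}

theorem mul_pow_two_eq_one_iff_commute (hu : u * u = 1) (hv : v * v = 1) :
    (u * v) ^ 2 = 1 ↔ Commute u v := by
  rw [pow_two, mul_eq_one_iff_eq_inv, mul_inv_rev, inv_eq_of_mul_eq_one_right hu,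
    inv_eq_of_mul_eq_one_right hv]
  rfl

theorem mul_pow_three_eq_one_iff_braid (hu : u * u = 1) (hv : v * v = 1) :
    (u * v) ^ 3 = 1 ↔ u * v * u = v * u * v := by
  rw [show (u * v) ^ 3 = u * v * u * (v * u * v) by
      simp only [pow_succ, pow_zero, one_mul, mul_assoc],
    mul_eq_one_iff_eq_inv]
  simp only [mul_inv_rev, inv_eq_of_mul_eq_one_right hu, inv_eq_of_mul_eq_one_right hv, mul_assoc]

end Involutions

section ConjPow

variable {G : Type*} [Group G]

def conjPow (s x : G) (i : ℕ) : G := s ^ i * x * (s ^ i)⁻¹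

variable {s x : G}

@[simp] theorem conjPow_zero : conjPow s x 0 = x := by simp [conjPow]

theorem conjPow_add (i j : ℕ) : conjPow s x (i + j) = s ^ i * conjPow s x j * (s ^ i)⁻¹ := by
  simp only [conjPow, pow_add]
  group

theorem conjPow_mul_self (hx : x * x = 1) (i : ℕ) : conjPow s x i * conjPow s x i = 1 := by
  rw [conjPow, show s ^ i * x * (s ^ i)⁻¹ * (s ^ i * x * (s ^ i)⁻¹) = s ^ i * (x * x) * (s ^ i)⁻¹
    by group, hx, mul_one, mul_inv_cancel]

theorem map_conjPow {H : Type*} [Group H] (f : G →* H) (s x : G) (i : ℕ) :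
    f (conjPow s x i) = conjPow (f s) (f x) i := by
  simp [conjPow]

theorem prod_map_range_conjPow_mul_pow (k : ℕ) :
    ((List.range k).map (conjPow s x)).prod * s ^ k = (x * s) ^ k := by
  induction k with
  | zero => simp
  | succ k ih =>
    rw [List.prod_range_succ, pow_succ (x * s), ← ih, conjPow]
    group

end ConjPow

section CoxeterElement

variable {G : Type*} [Group G] {t : ℕ → G} {m : ℕ}

theorem semiconjBy_prod_map_range_of_braid
    (hcomm : ∀ i j, i + 2 ≤ j → j < m → Commute (t i) (t j))
    (hbraid : ∀ i, i + 1 < m → t i * t (i + 1) * t i = t (i + 1) * t i * t (i + 1))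
    {j : ℕ} (hj : j + 1 < m) :
    SemiconjBy ((List.range m).map t).prod (t j) (t (j + 1)) := by
  obtain ⟨k, rfl⟩ : ∃ k, m = j + 2 + k := ⟨m - (j + 2), by omega⟩
  set P := ((List.range j).map t).prod
  set Q := ((List.range k).map fun i => t (j + 2 + i)).prod
  have hP : Commute P (t (j + 1)) := Commute.list_prod_left _ _ (by
    simp only [List.mem_map, List.mem_range]
    rintro _ ⟨i, hi, rfl⟩
    exact hcomm i (j + 1) (by omega) (by omega))
  have hQ : Commute (t j) Q := Commute.list_prod_right _ _ (by
    simp only [List.mem_map, List.mem_range]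
    rintro _ ⟨i, hi, rfl⟩
    exact hcomm j _ (by omega) (by omega))
  have hsplit : ((List.range (j + 2 + k)).map t).prod = P * t j * t (j + 1) * Q := by
    rw [List.range_add, List.map_append, List.prod_append, List.prod_range_succ,
      List.prod_range_succ, List.map_map]
    rfl
  rw [SemiconjBy, hsplit]
  calc P * t j * t (j + 1) * Q * t j = P * (t j * t (j + 1) * t j) * Q := by
        simp only [mul_assoc, ← hQ.eq]
    _ = P * t (j + 1) * (t j * t (j + 1) * Q) := by
        rw [hbraid j (by omega)]; simp only [mul_assoc]
    _ = t (j + 1) * (P * t j * t (j + 1) * Q) := by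
        rw [hP.eq]; simp only [mul_assoc]

theorem conjPow_eq_of_semiconjBy {c : G} (h : ∀ j, j + 1 < m → SemiconjBy c (t j) (t (j + 1)))
    {k : ℕ} (hk : k < m) : conjPow c (t 0) k = t k := by
  suffices SemiconjBy (c ^ k) (t 0) (t k) from mul_inv_eq_of_eq_mul this
  induction k with
  | zero => rw [pow_zero]; exact SemiconjBy.one_left _
  | succ k ih => rw [pow_succ']; exact (h k hk).mul_left (ih (by omega))

theorem prod_map_range_pow_succ (h : ∀ j, j + 1 < m →
      SemiconjBy ((List.range m).map t).prod (t j) (t (j + 1))) :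
    ((List.range m).map t).prod ^ (m + 1) = (((List.range m).map t).prod * t 0) ^ m := by
  set c := ((List.range m).map t).prod
  have hc : ((List.range m).map (conjPow c (t 0))).prod = c :=
    congrArg List.prod (List.map_congr_left fun k hk =>
      conjPow_eq_of_semiconjBy h (List.mem_range.1 hk))
  have htel := prod_map_range_conjPow_mul_pow (s := c) (x := t 0) m
  rw [hc, ← pow_succ'] at htel
  have hconj : SemiconjBy c ((t 0 * c) ^ m) ((c * t 0) ^ m) :=
    SemiconjBy.pow_right (by simp only [SemiconjBy, mul_assoc]) m
  rw [← htel] at hconj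
  exact mul_right_cancel ((pow_mul_comm' c (m + 1)).trans hconj)

end CoxeterElement

section ThreeGenerators

variable {G : Type*} [Group G] {s x : G}

theorem mul_pow_eq_of_pow_eq_mul_pow {n k : ℕ} (h : s ^ n = (s * x) ^ k) :
    (x * s) ^ k = s ^ n := by
  have : SemiconjBy s ((x * s) ^ k) ((s * x) ^ k) :=
    SemiconjBy.pow_right (by simp only [SemiconjBy, mul_assoc]) k
  rw [← h] at this
  exact mul_left_cancel (this.trans (pow_mul_comm' s n))

theorem commute_pow_of_pow_eq_mul_pow {n k : ℕ} (h : s ^ n = (s * x) ^ k) :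
    Commute x (s ^ n) := by
  have : SemiconjBy x ((s * x) ^ k) ((x * s) ^ k) :=
    SemiconjBy.pow_right (by simp only [SemiconjBy, mul_assoc]) k
  rwa [← h, mul_pow_eq_of_pow_eq_mul_pow h] at this

theorem prod_map_range_conjPow_eq_self {k : ℕ} (h : s ^ (k + 1) = (s * x) ^ k) :
    ((List.range k).map (conjPow s x)).prod = s := by
  have := prod_map_range_conjPow_mul_pow (s := s) (x := x) k
  rw [mul_pow_eq_of_pow_eq_mul_pow h, pow_succ'] at this
  exact mul_right_cancel this

theorem commute_conjPow_add {d : ℕ} (h : Commute x (conjPow s x d)) (i : ℕ) :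
    Commute (conjPow s x i) (conjPow s x (i + d)) := by
  rw [conjPow_add]
  exact h.conj _

theorem commute_conjPow_of_commute_le_half {n : ℕ} (hper : Commute x (s ^ n))
    (hcomm : ∀ d, 2 ≤ d → d ≤ n / 2 → Commute x (conjPow s x d))
    {d : ℕ} (hd : 2 ≤ d) (hdn : d ≤ n - 2) : Commute x (conjPow s x d) := by
  by_cases hhalf : d ≤ n / 2
  · exact hcomm d hd hhalf
  have hn : conjPow s x n = x := mul_inv_eq_of_eq_mul hper.eq.symm
  have := commute_conjPow_add (hcomm (n - d) (by omega) (by omega)) d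
  rw [Nat.add_sub_cancel' (by omega), hn] at this
  exact this.symm

theorem conjPow_braid {n : ℕ} (hn : 3 ≤ n)
    (hs : ((List.range (n - 1)).map (conjPow s x)).prod = s)
    (hcomm : ∀ d, 2 ≤ d → d ≤ n - 2 → Commute x (conjPow s x d)) (k : ℕ) :
    conjPow s x k * conjPow s x (k + 1) * conjPow s x k =
      conjPow s x (k + 1) * conjPow s x k * conjPow s x (k + 1) := by
  suffices hbraid : x * conjPow s x 1 * x = conjPow s x 1 * x * conjPow s x 1 by
    rw [conjPow_add k 1, show conjPow s x k = s ^ k * x * (s ^ k)⁻¹ from rfl]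
    calc _ = s ^ k * (x * conjPow s x 1 * x) * (s ^ k)⁻¹ := by group
      _ = _ := by rw [hbraid]; group
  set a := conjPow s x 1
  set T := ((List.range (n - 3)).map fun i => conjPow s x (2 + i)).prod
  have hsplit : x * a * T = s := by
    conv_rhs => rw [← hs, show n - 1 = 2 + (n - 3) by omega, List.range_add, List.map_append,
      List.prod_append, List.map_map]
    simp [a, T, List.prod_range_succ, Function.comp_def]
  have hT : Commute x T := Commute.list_prod_right _ _ (by
    simp only [List.mem_map, List.mem_range]
    rintro _ ⟨i, hi, rfl⟩
    exact hcomm (2 + i) (by omega) (by omega))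
  have has : a * s = s * x := by simp [a, conjPow]
  rw [← hsplit] at has
  refine (mul_right_cancel (b := T) ?_).symm
  calc a * x * a * T = a * (x * a * T) := by simp only [mul_assoc]
    _ = x * a * T * x := has
    _ = x * a * x * T := by rw [mul_assoc _ T, ← hT.eq, ← mul_assoc]

end ThreeGenerators

@[simp] theorem mk_of {α : Type*} {rels : Set (FreeGroup α)} (a : α) :
    PresentedGroup.mk rels (FreeGroup.of a) = PresentedGroup.of a :=
  rfl

abbrev CoxD (n : ℕ) := PresentedGroup {r | IsCoxDRel n r}

abbrev CoxDThree (n : ℕ) := PresentedGroup {r | IsCoxDThreeRel n r}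

namespace CoxD

/-- `s_{i+1}` for `i < n - 1`; the value `1` beyond makes the involution and commutation relations
hold at every index. -/
def gen (n i : ℕ) : CoxD n := if h : i < n - 1 then PresentedGroup.of (.inl ⟨i, h⟩) else 1

def r (n : ℕ) : CoxD n := PresentedGroup.of (.inr ())

def coxeterElement (n : ℕ) : CoxD n := ((List.range (n - 1)).map (gen n)).prod

variable {n : ℕ}

theorem gen_val (i : Fin (n - 1)) : gen n i = PresentedGroup.of (.inl i) :=
  dif_pos i.isLt

theorem gen_mul_self (i : ℕ) : gen n i * gen n i = 1 := by
  unfold gen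
  split_ifs with h
  · simpa [pow_two] using
      PresentedGroup.one_of_mem (rels := {r | IsCoxDRel n r}) (IsCoxDRel.sq ⟨i, h⟩)
  · exact mul_one 1

theorem r_mul_self : r n * r n = 1 := by
  simpa [r, pow_two] using PresentedGroup.one_of_mem (rels := {r | IsCoxDRel n r}) IsCoxDRel.r_sq

theorem commute_gen {i j : ℕ} (hij : i + 2 ≤ j) : Commute (gen n i) (gen n j) := by
  by_cases hj : j < n - 1
  · rw [← mul_pow_two_eq_one_iff_commute (gen_mul_self i) (gen_mul_self j), gen, gen,
      dif_pos (by omega), dif_pos hj]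
    simpa using PresentedGroup.one_of_mem (rels := {r | IsCoxDRel n r})
      (IsCoxDRel.comm_ss ⟨i, by omega⟩ ⟨j, hj⟩ (by simp only; omega))
  · rw [show gen n j = 1 from dif_neg hj]
    exact Commute.one_right _

theorem gen_braid {i : ℕ} (hi : i + 1 < n - 1) :
    gen n i * gen n (i + 1) * gen n i = gen n (i + 1) * gen n i * gen n (i + 1) := by
  rw [← mul_pow_three_eq_one_iff_braid (gen_mul_self i) (gen_mul_self (i + 1)), gen, gen,
    dif_pos (by omega), dif_pos hi]
  simpa using PresentedGroup.one_of_mem (rels := {r | IsCoxDRel n r}) (IsCoxDRel.braid_s i hi)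

theorem commute_r_gen {i : ℕ} (hi : i ≠ 1) : Commute (r n) (gen n i) := by
  by_cases h : i < n - 1
  · rw [← mul_pow_two_eq_one_iff_commute r_mul_self (gen_mul_self i), gen, dif_pos h]
    simpa [r] using PresentedGroup.one_of_mem (rels := {r | IsCoxDRel n r})
      (IsCoxDRel.comm_r ⟨i, h⟩ hi)
  · rw [show gen n i = 1 from dif_neg h]
    exact Commute.one_right _

theorem r_braid (hn : 3 ≤ n) : r n * gen n 1 * r n = gen n 1 * r n * gen n 1 := by
  rw [← mul_pow_three_eq_one_iff_braid r_mul_self (gen_mul_self 1), gen, dif_pos (by omega)]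
  simpa [r] using PresentedGroup.one_of_mem (rels := {r | IsCoxDRel n r})
    (IsCoxDRel.braid_r (by omega))

theorem semiconjBy_coxeterElement {j : ℕ} (hj : j + 1 < n - 1) :
    SemiconjBy (coxeterElement n) (gen n j) (gen n (j + 1)) :=
  semiconjBy_prod_map_range_of_braid (fun _ _ hij _ => commute_gen hij) (fun _ => gen_braid) hj

theorem conjPow_coxeterElement {k : ℕ} (hk : k < n - 1) :
    conjPow (coxeterElement n) (gen n 0) k = gen n k :=
  conjPow_eq_of_semiconjBy (fun _ => semiconjBy_coxeterElement) hk

theorem coxeterElement_pow (hn : 1 ≤ n) :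
    coxeterElement n ^ n = (coxeterElement n * gen n 0) ^ (n - 1) := by
  have := prod_map_range_pow_succ (fun _ => semiconjBy_coxeterElement (n := n))
  rwa [Nat.sub_add_cancel hn] at this

theorem coxeterElement_eq_prod_ofFn :
    coxeterElement n = (List.ofFn fun i : Fin (n - 1) => PresentedGroup.of (.inl i)).prod := by
  unfold coxeterElement
  congr 1
  refine List.ext_getElem (by simp) fun k hk _ => ?_
  simp only [List.length_map, List.length_range] at hk
  simp [gen, hk]

theorem lift_eq_one_of_isCoxDThreeRel (hn : 3 ≤ n) {w : FreeGroup (Fin 3)}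
    (hw : IsCoxDThreeRel n w) : FreeGroup.lift ![gen n 0, coxeterElement n, r n] w = 1 := by
  cases hw <;> simp only [map_mul, map_pow, map_inv, FreeGroup.lift_apply_of, Matrix.cons_val,
    Matrix.cons_val_one, Matrix.cons_val_zero, Fin.isValue, mul_inv_eq_one]
  case r₁ i h₁ h₂ =>
    have := (commute_gen (n := n) (i := 0) (j := i) (by omega)).eq
    rw [← conjPow_coxeterElement (k := i) (by omega)] at this
    simpa only [conjPow, mul_assoc] using this
  case r₂ => exact coxeterElement_pow (by omega)
  case r₃ i h =>
    have := (commute_r_gen (n := n) (i := i) (by omega)).eq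
    rwa [← conjPow_coxeterElement (k := i) (by omega)] at this
  case r₄ =>
    have := r_braid hn
    rw [← conjPow_coxeterElement (k := 1) (by omega)] at this
    simpa only [conjPow, pow_one] using this
  case r₅ => exact (pow_two _).trans (gen_mul_self 0)
  case r₆ => exact (pow_two _).trans r_mul_self

end CoxD

namespace CoxDThree

def σ₁ (n : ℕ) : CoxDThree n := PresentedGroup.of 0

def σ (n : ℕ) : CoxDThree n := PresentedGroup.of 1

def ρ (n : ℕ) : CoxDThree n := PresentedGroup.of 2

variable {n : ℕ}

theorem σ₁_mul_self : σ₁ n * σ₁ n = 1 := by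
  simpa [σ₁, pow_two] using
    PresentedGroup.one_of_mem (rels := {r | IsCoxDThreeRel n r}) IsCoxDThreeRel.r₅

theorem ρ_mul_self : ρ n * ρ n = 1 := by
  simpa [ρ, pow_two] using
    PresentedGroup.one_of_mem (rels := {r | IsCoxDThreeRel n r}) IsCoxDThreeRel.r₆

theorem σ_pow : σ n ^ n = (σ n * σ₁ n) ^ (n - 1) := by
  simpa [σ, σ₁, mul_inv_eq_one] using
    PresentedGroup.one_of_mem (rels := {r | IsCoxDThreeRel n r}) IsCoxDThreeRel.r₂

theorem commute_σ₁_conjPow_of_le_half {i : ℕ} (h₁ : 2 ≤ i) (h₂ : i ≤ n / 2) :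
    Commute (σ₁ n) (conjPow (σ n) (σ₁ n) i) := by
  have := PresentedGroup.one_of_mem (rels := {r | IsCoxDThreeRel n r}) (IsCoxDThreeRel.r₁ i h₁ h₂)
  simp only [map_mul, map_pow, map_inv, mk_of, mul_inv_eq_one] at this
  simpa [σ, σ₁, Commute, SemiconjBy, conjPow, mul_assoc] using this

theorem commute_ρ_conjPow {i : ℕ} (h : i = 0 ∨ (2 ≤ i ∧ i ≤ n - 2)) :
    Commute (ρ n) (conjPow (σ n) (σ₁ n) i) := by
  have := PresentedGroup.one_of_mem (rels := {r | IsCoxDThreeRel n r}) (IsCoxDThreeRel.r₃ i h)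
  simp only [map_mul, map_pow, map_inv, mk_of, mul_inv_eq_one] at this
  exact this

theorem ρ_braid :
    ρ n * conjPow (σ n) (σ₁ n) 1 * ρ n = conjPow (σ n) (σ₁ n) 1 * ρ n * conjPow (σ n) (σ₁ n) 1 := by
  have := PresentedGroup.one_of_mem (rels := {r | IsCoxDThreeRel n r}) IsCoxDThreeRel.r₄
  simp only [map_mul, map_inv, mk_of, mul_inv_eq_one] at this
  simpa [ρ, σ, σ₁, conjPow] using this

theorem prod_map_range_conjPow (hn : 1 ≤ n) :
    ((List.range (n - 1)).map (conjPow (σ n) (σ₁ n))).prod = σ n :=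
  prod_map_range_conjPow_eq_self (by rw [Nat.sub_add_cancel hn]; exact σ_pow)

theorem commute_σ₁_conjPow {d : ℕ} (hd : 2 ≤ d) (hdn : d ≤ n - 2) :
    Commute (σ₁ n) (conjPow (σ n) (σ₁ n) d) :=
  commute_conjPow_of_commute_le_half (commute_pow_of_pow_eq_mul_pow σ_pow)
    (fun _ => commute_σ₁_conjPow_of_le_half) hd hdn

theorem lift_eq_one_of_isCoxDRel (hn : 3 ≤ n) {w : FreeGroup (Fin (n - 1) ⊕ Unit)}
    (hw : IsCoxDRel n w) :
    FreeGroup.lift (Sum.elim (fun i : Fin (n - 1) => conjPow (σ n) (σ₁ n) i) fun _ => ρ n) w = 1 := by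
  have ha (i : ℕ) := conjPow_mul_self (s := σ n) σ₁_mul_self i
  cases hw <;> simp only [map_mul, map_pow, FreeGroup.lift_apply_of, Sum.elim_inl, Sum.elim_inr]
  case sq i => exact (pow_two _).trans (ha i)
  case r_sq => exact (pow_two _).trans ρ_mul_self
  case comm_ss i j hij =>
    rw [mul_pow_two_eq_one_iff_commute (ha i) (ha j)]
    have := commute_conjPow_add (commute_σ₁_conjPow (n := n) (d := j - i) (by omega) (by omega)) i
    rwa [Nat.add_sub_cancel' (by omega)] at this
  case braid_s i hi =>
    rw [mul_pow_three_eq_one_iff_braid (ha i) (ha (i + 1))]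
    exact conjPow_braid hn (prod_map_range_conjPow (by omega)) (fun _ => commute_σ₁_conjPow) i
  case comm_r i hi =>
    rw [mul_pow_two_eq_one_iff_commute ρ_mul_self (ha i)]
    exact commute_ρ_conjPow (by omega)
  case braid_r h =>
    rw [mul_pow_three_eq_one_iff_braid ρ_mul_self (ha 1)]
    exact ρ_braid

end CoxDThree


section Isomorphism

variable {n : ℕ}

def toCoxD (hn : 3 ≤ n) : CoxDThree n →* CoxD n :=
  PresentedGroup.toGroup fun _ => CoxD.lift_eq_one_of_isCoxDThreeRel hn

def ofCoxD (hn : 3 ≤ n) : CoxD n →* CoxDThree n :=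
  PresentedGroup.toGroup fun _ => CoxDThree.lift_eq_one_of_isCoxDRel hn

theorem toCoxD_σ₁ (hn : 3 ≤ n) : toCoxD hn (CoxDThree.σ₁ n) = CoxD.gen n 0 :=
  PresentedGroup.toGroup.of _

theorem toCoxD_σ (hn : 3 ≤ n) : toCoxD hn (CoxDThree.σ n) = CoxD.coxeterElement n :=
  PresentedGroup.toGroup.of _

theorem toCoxD_ρ (hn : 3 ≤ n) : toCoxD hn (CoxDThree.ρ n) = CoxD.r n :=
  PresentedGroup.toGroup.of _

theorem ofCoxD_gen (hn : 3 ≤ n) {i : ℕ} (hi : i < n - 1) :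
    ofCoxD hn (CoxD.gen n i) = conjPow (CoxDThree.σ n) (CoxDThree.σ₁ n) i := by
  rw [CoxD.gen, dif_pos hi, ofCoxD, PresentedGroup.toGroup.of]
  rfl

theorem ofCoxD_r (hn : 3 ≤ n) : ofCoxD hn (CoxD.r n) = CoxDThree.ρ n :=
  PresentedGroup.toGroup.of _

theorem ofCoxD_comp_toCoxD (hn : 3 ≤ n) : (ofCoxD hn).comp (toCoxD hn) = MonoidHom.id _ := by
  refine PresentedGroup.ext fun i => ?_
  fin_cases i
  · change ofCoxD hn (toCoxD hn (CoxDThree.σ₁ n)) = CoxDThree.σ₁ n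
    rw [toCoxD_σ₁, ofCoxD_gen hn (by omega), conjPow_zero]
  · change ofCoxD hn (toCoxD hn (CoxDThree.σ n)) = CoxDThree.σ n
    rw [toCoxD_σ, CoxD.coxeterElement, map_list_prod, List.map_map]
    conv_rhs => rw [← CoxDThree.prod_map_range_conjPow (n := n) (by omega)]
    exact congrArg List.prod (List.map_congr_left fun i hi =>
      ofCoxD_gen hn (List.mem_range.1 hi))
  · change ofCoxD hn (toCoxD hn (CoxDThree.ρ n)) = CoxDThree.ρ n
    rw [toCoxD_ρ, ofCoxD_r]

theorem toCoxD_comp_ofCoxD (hn : 3 ≤ n) : (toCoxD hn).comp (ofCoxD hn) = MonoidHom.id _ := by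
  refine PresentedGroup.ext fun i => ?_
  rcases i with i | ⟨⟩
  · change toCoxD hn (ofCoxD hn (PresentedGroup.of (.inl i))) = PresentedGroup.of (.inl i)
    rw [← CoxD.gen_val, ofCoxD_gen hn i.isLt, map_conjPow, toCoxD_σ, toCoxD_σ₁,
      CoxD.conjPow_coxeterElement i.isLt]
  · change toCoxD hn (ofCoxD hn (CoxD.r n)) = CoxD.r n
    rw [ofCoxD_r, toCoxD_ρ]

end Isomorphism

theorem three_generator_presentation_of_coxeter_D (n : ℕ) (hn : 3 ≤ n) :
    ∃ e : PresentedGroup {r | IsCoxDThreeRel n r} ≃* PresentedGroup {r | IsCoxDRel n r},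
      e (.of 0) = PresentedGroup.of (Sum.inl ⟨0, by omega⟩) ∧
      e (.of 2) = PresentedGroup.of (Sum.inr ()) ∧
      e (.of 1) = (List.ofFn (fun i : Fin (n - 1) =>
        (PresentedGroup.of (Sum.inl i) : PresentedGroup {r | IsCoxDRel n r}))).prod :=
  ⟨(toCoxD hn).toMulEquiv (ofCoxD hn) (ofCoxD_comp_toCoxD hn) (toCoxD_comp_ofCoxD hn),
    (toCoxD_σ₁ hn).trans (CoxD.gen_val ⟨0, by omega⟩), toCoxD_ρ hn,
    (toCoxD_σ hn).trans CoxD.coxeterElement_eq_prod_ofFn⟩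

end CoxeterD
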